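/- arXiv:1401.0770 — 6 statements merged into one kernel-verified Lean document; each statement's English description precedes it below -/
import Mathlib

section
/- For integers r,s ≥ 1, the partial Catalan convolution p_{r,s} = Σ_{k=1}^{s} C_{r+s-(k+1)} · C_{k-1} satisfies p_{r,s} = C_{r+s-2} + Σ_{k=1}^{s-1} C_{k-1} · p_{r,s-k}, where C_n denotes the n-th Catalan number. -/
/-!
With `r = a + 1` and `s = m + 1`, the partial convolution is `Σ_{i+j=m} C_i C_{a+j}`. Splitting off
the term `i = 0` leaves `C_{a+m}`; in the remaining terms expand `C_{i+1} = Σ_{u+v=i} C_u C_v`.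
The resulting sum over `u + v + j = m - 1` regroups, by associativity of the Cauchy product, into
`Σ_{u+t=m-1} C_u Σ_{v+j=t} C_v C_{a+j}`, i.e. into the convolution of `C` with the shorter partial
convolutions.
-/

open Finset

/-- The partial Catalan convolution `p_{r,s} = Σ_{k=1}^{s} C_{r+s-k-1} · C_{k-1}`. -/
def partialCatalanConv (r s : ℕ) : ℕ :=
  ∑ k ∈ Finset.Icc 1 s, catalan (r + s - k - 1) * catalan (k - 1)

theorem sum_antidiagonal_convolution_assoc {R : Type*} [Semiring R] (a b c : ℕ → R) (n : ℕ) :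
    ∑ x ∈ antidiagonal n, (∑ y ∈ antidiagonal x.1, a y.1 * b y.2) * c x.2 =
      ∑ x ∈ antidiagonal n, a x.1 * ∑ y ∈ antidiagonal x.2, b y.1 * c y.2 := by
  simpa [PowerSeries.coeff_mul] using congrArg (PowerSeries.coeff n)
    (mul_assoc (PowerSeries.mk a) (PowerSeries.mk b) (PowerSeries.mk c))

theorem sum_Icc_one_eq_sum_antidiagonal {M : Type*} [AddCommMonoid M] (f : ℕ → ℕ → M) (m : ℕ) :
    ∑ k ∈ Icc 1 (m + 1), f (k - 1) (m + 1 - k) = ∑ x ∈ antidiagonal m, f x.1 x.2 := by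
  rw [Nat.sum_antidiagonal_eq_sum_range_succ f, ← Ico_add_one_right_eq_Icc, sum_Ico_eq_sum_range,
    Nat.add_sub_cancel]
  refine sum_congr rfl fun k _ => ?_
  congr 1 <;> omega

def catalanShiftConv (a m : ℕ) : ℕ :=
  ∑ x ∈ antidiagonal m, catalan x.1 * catalan (a + x.2)

theorem catalanShiftConv_succ (a m : ℕ) :
    catalanShiftConv a (m + 1) =
      catalan (a + m + 1) + ∑ x ∈ antidiagonal m, catalan x.1 * catalanShiftConv a x.2 := by
  rw [catalanShiftConv, Nat.sum_antidiagonal_succ, catalan_zero, one_mul, ← add_assoc]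
  congr 1
  simp only [catalan_succ', catalanShiftConv]
  exact sum_antidiagonal_convolution_assoc catalan catalan (fun j => catalan (a + j)) m

theorem partialCatalanConv_succ_succ (a m : ℕ) :
    partialCatalanConv (a + 1) (m + 1) = catalanShiftConv a m := by
  rw [partialCatalanConv, catalanShiftConv,
    ← sum_Icc_one_eq_sum_antidiagonal (fun u t => catalan u * catalan (a + t))]
  refine sum_congr rfl fun k hk => ?_
  have hindex : a + 1 + (m + 1) - k - 1 = a + (m + 1 - k) := by grind
  rw [hindex, mul_comm]

theorem partialCatalanConv_recurrence (r s : ℕ) (hr : 1 ≤ r) (hs : 1 ≤ s) :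
    partialCatalanConv r s =
      catalan (r + s - 2) +
        ∑ k ∈ Finset.Icc 1 (s - 1), catalan (k - 1) * partialCatalanConv r (s - k) := by
  obtain ⟨a, rfl⟩ : ∃ a, r = a + 1 := ⟨r - 1, by omega⟩
  obtain ⟨m, rfl⟩ : ∃ m, s = m + 1 := ⟨s - 1, by omega⟩
  rcases m with _ | m
  · simp [partialCatalanConv]
  · rw [partialCatalanConv_succ_succ, catalanShiftConv_succ, Nat.add_sub_cancel,
      ← sum_Icc_one_eq_sum_antidiagonal (fun u t : ℕ => catalan u * catalanShiftConv a t) m]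
    congr 1
    · congr 1
      omega
    · refine sum_congr rfl fun k hk => ?_
      have hindex : m + 1 + 1 - k = m + 1 - k + 1 := by grind
      rw [hindex, partialCatalanConv_succ_succ]
end

section
/- The Catalan numbers satisfy the asymptotic formula C_n ~ 4^n / (√π · n^{3/2}) as n → ∞; that is, the limit of C_n · √π · n^{3/2} / 4^n as n → ∞ equals 1. -/
/-!
Since `C n = (2n choose n) / (n + 1)`, it suffices to know that
`(2n choose n) · √(π n) / 4 ^ n → 1`. Writing the central binomial coefficient as
`(2n)! / (n!)²` expresses this quantity as `stirlingSeq (2n) / (stirlingSeq n)² · √π`,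
which tends to `√π / π · √π = 1` by Stirling's formula.
-/

open Filter Real Stirling Nat Topology

lemma Nat.cast_centralBinom_eq_factorial_div (n : ℕ) :
    (n.centralBinom : ℝ) = (2 * n)! / (n ! ^ 2) := by
  rw [centralBinom_eq_two_mul_choose, cast_choose ℝ (by omega), two_mul, Nat.add_sub_cancel, sq]

lemma cast_catalan_eq_centralBinom_div (n : ℕ) :
    (catalan n : ℝ) = n.centralBinom / (n + 1) := by
  rw [catalan_eq_centralBinom_div, Nat.cast_div n.succ_dvd_centralBinom (by positivity)]
  push_cast
  rfl

lemma Stirling.centralBinom_mul_sqrt_div_four_pow {n : ℕ} (hn : n ≠ 0) :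
    n.centralBinom * √(π * n) / 4 ^ n = stirlingSeq (2 * n) / stirlingSeq n ^ 2 * √π := by
  have h2n : √(2 * (2 * n : ℕ) : ℝ) = 2 * √(n : ℝ) := by
    push_cast
    rw [show (2 : ℝ) * (2 * n) = 2 ^ 2 * n by ring, sqrt_mul (by positivity),
      sqrt_sq (by norm_num)]
  rw [Nat.cast_centralBinom_eq_factorial_div, stirlingSeq, stirlingSeq, h2n, sqrt_mul pi_pos.le,
    sqrt_mul zero_le_two]
  push_cast
  rw [show (2 * n / rexp 1 : ℝ) ^ (2 * n) = 4 ^ n * ((n / rexp 1) ^ n) ^ 2 by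
    rw [mul_div_assoc, mul_pow, pow_mul, pow_mul']; norm_num]
  field_simp
  rw [sq_sqrt zero_le_two]

lemma Stirling.tendsto_centralBinom_mul_sqrt_div_four_pow :
    Tendsto (fun n : ℕ ↦ n.centralBinom * √(π * n) / 4 ^ n) atTop (𝓝 1) := by
  have h2n : Tendsto (fun n : ℕ ↦ stirlingSeq (2 * n)) atTop (𝓝 √π) :=
    tendsto_stirlingSeq_sqrt_pi.comp (tendsto_id.const_mul_atTop' two_pos)
  have hlim := (h2n.div (tendsto_stirlingSeq_sqrt_pi.pow 2) (by positivity)).mul_const √π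
  rw [show √π / √π ^ 2 * √π = 1 by field_simp] at hlim
  refine hlim.congr' ?_
  filter_upwards [eventually_ne_atTop 0] with n hn
  exact (centralBinom_mul_sqrt_div_four_pow hn).symm

lemma Real.rpow_three_halves {x : ℝ} (hx : 0 ≤ x) : x ^ (3 / 2 : ℝ) = x * √x := by
  rw [show (3 / 2 : ℝ) = 1 + 1 / 2 by norm_num, rpow_one_add' hx (by norm_num), sqrt_eq_rpow]

lemma catalan_mul_sqrt_pi_mul_rpow_div_four_pow (n : ℕ) :
    catalan n * √π * (n : ℝ) ^ (3 / 2 : ℝ) / 4 ^ n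
      = n.centralBinom * √(π * n) / 4 ^ n * (n / (n + 1)) := by
  rw [cast_catalan_eq_centralBinom_div, rpow_three_halves n.cast_nonneg, sqrt_mul pi_pos.le]
  ring

theorem catalan_asymptotic :
    Filter.Tendsto
      (fun n : ℕ => (catalan n : ℝ) * Real.sqrt Real.pi * (n : ℝ) ^ (3 / 2 : ℝ) / 4 ^ n)
      Filter.atTop (nhds 1) := by
  simp_rw [catalan_mul_sqrt_pi_mul_rpow_div_four_pow]
  simpa using
    tendsto_centralBinom_mul_sqrt_div_four_pow.mul (tendsto_natCast_div_add_atTop (1 : ℝ))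
end

section
/- If σ is a permutation of {1,...,n} that is a Baxter permutation, then its inverse σ^{-1} is also a Baxter permutation. -/
/-- A permutation of `Fin n` (0-indexed) is a Baxter permutation if there are no
indices `i < j < j+1 ≤ k` with `σ(j+1) < σ(i) < σ(k) < σ(j)` or
`σ(j) < σ(k) < σ(i) < σ(j+1)`. -/
def IsBaxter {n : ℕ} (σ : Equiv.Perm (Fin n)) : Prop :=
  ∀ i j k : Fin n, i < j → ∀ h : (j : ℕ) + 1 ≤ (k : ℕ),
    ¬ ((σ ⟨(j : ℕ) + 1, lt_of_le_of_lt h k.isLt⟩ < σ i ∧ σ i < σ k ∧ σ k < σ j) ∨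
       (σ j < σ k ∧ σ k < σ i ∧ σ i < σ ⟨(j : ℕ) + 1, lt_of_le_of_lt h k.isLt⟩))

/-- A permutation is alternating: ascents at even (0-indexed) positions,
descents at odd positions, i.e. `σ(1) < σ(2) > σ(3) < σ(4) > ⋯` in 1-indexed terms. -/
def IsAlternating {n : ℕ} (σ : Equiv.Perm (Fin n)) : Prop :=
  ∀ i : Fin n, ∀ h : (i : ℕ) + 1 < n,
    (Even (i : ℕ) → σ i < σ ⟨(i : ℕ) + 1, h⟩) ∧
    (Odd (i : ℕ) → σ ⟨(i : ℕ) + 1, h⟩ < σ i)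

/-- Reverse-alternating: `σ(1) > σ(2) < σ(3) > ⋯` in 1-indexed terms. -/
def IsRevAlternating {n : ℕ} (σ : Equiv.Perm (Fin n)) : Prop :=
  ∀ i : Fin n, ∀ h : (i : ℕ) + 1 < n,
    (Even (i : ℕ) → σ ⟨(i : ℕ) + 1, h⟩ < σ i) ∧
    (Odd (i : ℕ) → σ i < σ ⟨(i : ℕ) + 1, h⟩)

/-- Doubly alternating Baxter permutation. -/
def IsDAB {n : ℕ} (σ : Equiv.Perm (Fin n)) : Prop :=
  IsBaxter σ ∧ IsAlternating σ ∧ IsAlternating σ⁻¹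

/-- `B(m,i,j)`: the number of doubly alternating Baxter permutations of `{1,…,2m}`
with `σ(i) = j` (here `i, j` are 1-indexed). -/
noncomputable def dabCount (m i j : ℕ) : ℕ :=
  Nat.card {σ : Equiv.Perm (Fin (2 * m)) //
    IsDAB σ ∧ ∃ hi : i - 1 < 2 * m, ((σ ⟨i - 1, hi⟩ : Fin (2 * m)) : ℕ) = j - 1}

/-!
Suppose `σ⁻¹` has the first forbidden pattern at values `i < j < j + 1 < k`: the positions of
`j + 1`, `i`, `k`, `j` occur in this order in `σ`. Between the position of `i` and that of `k`,
`σ` rises from below `j` to above `j + 1`, so it does so in one step `q, q + 1`; then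
`σ q < j < j + 1 < σ (q + 1)` with `q, q + 1` lying between the positions of `j + 1` and `j`,
a forbidden pattern of `σ`. The second kind of pattern of `σ⁻¹` gives the same configuration in
the complement `v ↦ n - 1 - v` of `σ`, which is again Baxter.
-/

theorem Nat.exists_le_lt_and_not_succ {P : ℕ → Prop} {a c : ℕ} (hac : a ≤ c) (ha : P a)
    (hc : ¬ P c) : ∃ q, a ≤ q ∧ q < c ∧ P q ∧ ¬ P (q + 1) := by
  induction c, hac using Nat.le_induction with
  | base => exact absurd ha hc
  | succ c hac ih =>
    by_cases hPc : P c
    · exact ⟨c, hac, c.lt_succ_self, hPc, hc⟩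
    · obtain ⟨q, haq, hqc, hq⟩ := ih hPc
      exact ⟨q, haq, hqc.trans c.lt_succ_self, hq⟩

theorem Fin.exists_le_lt_apply_succ {n : ℕ} {α : Type*} [LinearOrder α] (f : Fin n → α)
    {a c : Fin n} {t : α} (hac : a ≤ c) (ha : f a ≤ t) (hc : t < f c) :
    ∃ q : Fin n, ∃ hq : (q : ℕ) + 1 < n,
      a ≤ q ∧ (q : ℕ) + 1 ≤ c ∧ f q ≤ t ∧ t < f ⟨q + 1, hq⟩ := by
  obtain ⟨q, haq, hqc, hq, hq'⟩ := Nat.exists_le_lt_and_not_succ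
    (P := fun m => ∀ hm : m < n, f ⟨m, hm⟩ ≤ t) hac (fun _ => ha)
    (fun h => (h c.isLt).not_gt hc)
  have hq1 : q + 1 < n := lt_of_le_of_lt hqc c.isLt
  refine ⟨⟨q, Nat.lt_of_succ_lt hq1⟩, hq1, haq, hqc, hq _, ?_⟩
  by_contra! hle
  exact hq' fun _ => hle

theorem IsBaxter.trans_revPerm {n : ℕ} {σ : Equiv.Perm (Fin n)} (h : IsBaxter σ) :
    IsBaxter (σ.trans Fin.revPerm) := by
  intro i j k hij hjk hpat
  simp only [Equiv.trans_apply, Fin.revPerm_apply, Fin.rev_lt_rev] at hpat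
  exact h i j k hij hjk (by tauto)

theorem IsBaxter.apply_le_of_between {n : ℕ} {σ : Equiv.Perm (Fin n)} (h : IsBaxter σ)
    {x a c y : Fin n} (hxa : x < a) (hac : a ≤ c) (hcy : c < y)
    (hxy : (σ x : ℕ) = σ y + 1) (ha : σ a ≤ σ y) : σ c ≤ σ y := by
  by_contra! hc
  obtain ⟨q, hq, haq, hqc, hσq, hσq'⟩ := Fin.exists_le_lt_apply_succ σ hac ha hc
  have hσq_ne : σ q ≠ σ y := σ.injective.ne (Fin.ne_of_val_ne (by omega))
  have hσq'_ne : (σ ⟨q + 1, hq⟩ : ℕ) ≠ σ x :=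
    Fin.val_ne_of_ne (σ.injective.ne (Fin.ne_of_val_ne (by rw [Fin.val_mk]; omega)))
  refine h x q y (by omega) (by omega) (Or.inr ⟨lt_of_le_of_ne hσq hσq_ne, ?_, ?_⟩)
  · rw [Fin.lt_def]; omega
  · rw [Fin.lt_def] at hσq' ⊢; omega

theorem isBaxter_inv {n : ℕ} (σ : Equiv.Perm (Fin n)) (h : IsBaxter σ) :
    IsBaxter σ⁻¹ := by
  intro i j k hij hjk hpat
  rcases hpat with ⟨h₁, h₂, h₃⟩ | ⟨h₁, h₂, h₃⟩
  · have hkj := h.apply_le_of_between h₁ h₂.le h₃ (by simp) (by simpa using hij.le)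
    simp only [Equiv.Perm.coe_inv, Equiv.apply_symm_apply, Fin.le_def] at hkj
    omega
  · have hrev (v : Fin n) : (σ.trans Fin.revPerm) (σ⁻¹ v) = v.rev := by simp
    have hji := h.trans_revPerm.apply_le_of_between h₁ h₂.le h₃
      (by simp only [hrev, Fin.val_rev]; omega)
      (by rw [hrev, hrev, Fin.rev_le_rev, Fin.le_def]; omega)
    rw [hrev, hrev, Fin.rev_le_rev, Fin.le_def, Fin.val_mk] at hji
    omega
end

section
/- Let B(m,i,j) be the number of doubly alternating Baxter permutations σ of {1,...,2m} with σ(i) = j. Then B(m,i,j) = B(m,j,i) for all m ≥ 1 and i,j ∈ {1,...,2m}. -/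
/- If a Baxter pattern of `σ⁻¹` sits at adjacent positions `b, b + 1` of `σ⁻¹`, then `σ` takes
the adjacent values `b, b + 1` at two positions enclosing a segment on which `σ` climbs from below
`b` to above `b + 1` (or descends the other way). Never taking the values `b, b + 1` on that
segment, `σ` must jump across them between two neighbouring positions `j, j + 1`, which is a Baxter
pattern of `σ`. Hence the inverse of a Baxter permutation is Baxter, and `σ ↦ σ⁻¹` maps the
permutations counted by `B(m, i, j)` bijectively onto those counted by `B(m, j, i)`. -/

theorem Nat.exists_transition {P : ℕ → Prop} {p r : ℕ} (hpr : p ≤ r) (hp : P p) (hr : ¬ P r) :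
    ∃ j, p ≤ j ∧ j < r ∧ P j ∧ ¬ P (j + 1) := by
  induction r, hpr using Nat.le_induction with
  | base => exact absurd hp hr
  | succ r hpr ih =>
    by_cases h : P r
    · exact ⟨r, hpr, r.lt_succ_self, h, hr⟩
    · obtain ⟨j, hpj, hjr, hj, hj'⟩ := ih h
      exact ⟨j, hpj, by omega, hj, hj'⟩

theorem Fin.exists_jump_across {α : Type*} [LinearOrder α] {n : ℕ} (f : Fin n → α) {x y : α}
    (hxy : x ≤ y) {p r : Fin n} (hpr : p ≤ r) (hp : f p < x) (hr : y < f r)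
    (hgap : ∀ t, p ≤ t → t ≤ r → f t < x ∨ y < f t) :
    ∃ (j : Fin n) (h : (j : ℕ) + 1 < n), p ≤ j ∧ (j : ℕ) + 1 ≤ r ∧ f j < x ∧ y < f ⟨j + 1, h⟩ := by
  obtain ⟨j, hpj, hjr, hj, hj'⟩ :=
    Nat.exists_transition (P := fun t => ∀ h : t < n, f ⟨t, h⟩ < x) (Fin.le_def.mp hpr)
      (fun _ => hp) (fun h => (h r.isLt).not_ge (hxy.trans hr.le))
  have hj1 : j + 1 < n := lt_of_le_of_lt hjr r.isLt
  have hjump : ¬ f ⟨j + 1, hj1⟩ < x := fun h => hj' fun _ => h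
  refine ⟨⟨j, j.lt_succ_self.trans hj1⟩, hj1, hpj, hjr, hj _, ?_⟩
  exact (hgap ⟨j + 1, hj1⟩ (Fin.le_def.mpr (hpj.trans j.le_succ)) (Fin.le_def.mpr hjr)).resolve_left
      hjump

theorem IsBaxter.inv {n : ℕ} {σ : Equiv.Perm (Fin n)} (h : IsBaxter σ) : IsBaxter σ⁻¹ := by
  intro a b c hab hbc hpat
  set b₁ : Fin n := ⟨b + 1, lt_of_le_of_lt hbc c.isLt⟩
  have hbb₁ : b < b₁ := Fin.lt_def.mpr (Nat.lt_succ_self b)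
  have hgap : ∀ t, t ≠ σ⁻¹ b → t ≠ σ⁻¹ b₁ → σ t < b ∨ b₁ < σ t := by
    intro t htb htb₁
    have hb : σ t ≠ b := fun e => htb (Equiv.Perm.eq_inv_iff_eq.mpr e)
    have hb₁ : σ t ≠ b₁ := fun e => htb₁ (Equiv.Perm.eq_inv_iff_eq.mpr e)
    simp only [Fin.lt_def, ne_eq, Fin.ext_iff, b₁] at hb hb₁ ⊢
    omega
  have hb₁c (hc : σ⁻¹ c ≠ σ⁻¹ b₁) : b₁ < c := by
    have : c ≠ b₁ := fun e => hc (congrArg _ e)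
    simp only [Fin.lt_def, ne_eq, Fin.ext_iff, b₁] at this hbc ⊢
    omega
  rcases hpat with ⟨h₁, h₂, h₃⟩ | ⟨h₁, h₂, h₃⟩
  · obtain ⟨j, _, hpj, hjr, hlo, hhi⟩ := Fin.exists_jump_across σ hbb₁.le h₂.le
      (by simpa using hab) (by simpa using hb₁c (h₁.trans h₂).ne')
      (fun t hpt htr => hgap t (htr.trans_lt h₃).ne (h₁.trans_le hpt).ne')
    refine h (σ⁻¹ b₁) j (σ⁻¹ b) (h₁.trans_le hpj) (hjr.trans (Fin.le_def.mp h₃.le)) (Or.inr ?_)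
    simp only [Equiv.Perm.coe_inv, Equiv.apply_symm_apply]
    exact ⟨hlo, hbb₁, hhi⟩
  · obtain ⟨j, _, hpj, hjr, hhi, hlo⟩ :=
      Fin.exists_jump_across (fun t => OrderDual.toDual (σ t))
        (OrderDual.toDual_le_toDual.mpr hbb₁.le) h₂.le
        (by simpa using hb₁c (h₂.trans h₃).ne) (by simpa using hab)
        (fun t hpt htr => (hgap t (h₁.trans_le hpt).ne' (htr.trans_lt h₃).ne).symm)
    refine h (σ⁻¹ b) j (σ⁻¹ b₁) (h₁.trans_le hpj) (hjr.trans (Fin.le_def.mp h₃.le)) (Or.inl ?_)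
    simp only [Equiv.Perm.coe_inv, Equiv.apply_symm_apply]
    exact ⟨hlo, hbb₁, hhi⟩

theorem isBaxter_inv_iff {n : ℕ} {σ : Equiv.Perm (Fin n)} : IsBaxter σ⁻¹ ↔ IsBaxter σ :=
  ⟨fun h => inv_inv σ ▸ h.inv, IsBaxter.inv⟩

theorem isDAB_inv_iff {n : ℕ} {σ : Equiv.Perm (Fin n)} : IsDAB σ⁻¹ ↔ IsDAB σ := by
  rw [IsDAB, IsDAB, isBaxter_inv_iff, inv_inv, and_comm (a := IsAlternating σ⁻¹)]

theorem Equiv.Perm.exists_val_apply_mk_eq_comm {n : ℕ} (σ : Equiv.Perm (Fin n)) (a b : ℕ) :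
    (∃ ha : a < n, (σ ⟨a, ha⟩ : ℕ) = b) ↔ ∃ hb : b < n, (σ⁻¹ ⟨b, hb⟩ : ℕ) = a := by
  constructor
  · rintro ⟨ha, rfl⟩
    exact ⟨(σ _).isLt, by simp⟩
  · rintro ⟨hb, rfl⟩
    exact ⟨(σ⁻¹ _).isLt, by simp⟩

theorem dabCount_symm_diag_general (m i j : ℕ) : dabCount m i j = dabCount m j i :=
  Nat.card_congr <| (Equiv.inv _).subtypeEquiv fun σ => by
    rw [Equiv.inv_apply, isDAB_inv_iff, σ.exists_val_apply_mk_eq_comm]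

theorem dabCount_symm_diag (m i j : ℕ) (hm : 1 ≤ m) (hi1 : 1 ≤ i) (hi2 : i ≤ 2 * m)
    (hj1 : 1 ≤ j) (hj2 : j ≤ 2 * m) : dabCount m i j = dabCount m j i :=
  dabCount_symm_diag_general m i j
end

section
/- Let B(m,i,j) be the number of doubly alternating Baxter permutations σ of {1,...,2m} with σ(i) = j. Then B(m,i,j) = B(m, 2m+1-j, 2m+1-i) for all m ≥ 1 and i,j ∈ {1,...,2m}. -/
/-!
Reflecting the permutation matrix in its antidiagonal, `σ ↦ rev ∘ σ⁻¹ ∘ rev`, is an involution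
that turns `σ i = j` into `σ' (2m+1-j) = 2m+1-i`, so it suffices that it preserves doubly
alternating Baxter permutations of even length. Conjugation by `rev` preserves alternation in
even length and preserves the Baxter property (reversal and complement each swap the two
forbidden patterns). The real point is that `σ⁻¹` is
Baxter: a forbidden pattern of `σ⁻¹` is a `3-1-4-2` or `2-4-1-3` in `σ` whose outer entries are
consecutive values, and the step between the `1` and the `4` at which `σ` crosses these two
values is an adjacent-position forbidden pattern of `σ`.
-/

theorem Nat.exists_crossing {P : ℕ → Prop} {p r : ℕ} (hpr : p ≤ r) (hp : P p) (hr : ¬ P r) :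
    ∃ x, p ≤ x ∧ x < r ∧ P x ∧ ¬ P (x + 1) := by
  induction r, hpr using Nat.le_induction with
  | base => exact absurd hp hr
  | succ r hpr ih =>
    by_cases h : P r
    · exact ⟨r, hpr, r.lt_succ_self, h, hr⟩
    · obtain ⟨x, hpx, hxr, hx, hx1⟩ := ih h
      exact ⟨x, hpx, hxr.trans r.lt_succ_self, hx, hx1⟩

theorem Fin.exists_crossing {n : ℕ} {P : Fin n → Prop} {p r : Fin n} (hpr : p ≤ r) (hp : P p)
    (hr : ¬ P r) : ∃ x y : Fin n, p ≤ x ∧ (y : ℕ) = x + 1 ∧ y ≤ r ∧ P x ∧ ¬ P y := by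
  obtain ⟨x, hpx, hxr, ⟨hxn, hx⟩, hx1⟩ := Nat.exists_crossing (P := fun k => ∃ h : k < n, P ⟨k, h⟩)
    hpr ⟨p.isLt, hp⟩ fun ⟨_, h⟩ => hr h
  exact ⟨⟨x, hxn⟩, ⟨x + 1, by omega⟩, hpx, rfl, hxr, hx, fun h => hx1 ⟨_, h⟩⟩

section Baxter

variable {n : ℕ} {σ : Equiv.Perm (Fin n)}

theorem isBaxter_iff : IsBaxter σ ↔ ∀ ⦃i j j' k : Fin n⦄, i < j → (j' : ℕ) = j + 1 → j' < k →
    ¬ (σ j' < σ i ∧ σ i < σ k ∧ σ k < σ j) ∧ ¬ (σ j < σ k ∧ σ k < σ i ∧ σ i < σ j') := by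
  constructor
  · rintro hB i j j' k hij hj' hj'k
    obtain ⟨j', hj'n⟩ := j'
    subst hj'
    exact not_or.mp (hB i j k hij hj'k.le)
  · intro hB i j k hij hjk
    obtain hjk | hjk := hjk.lt_or_eq
    · exact not_or.mpr (hB hij rfl hjk)
    · obtain ⟨k, hkn⟩ := k
      subst hjk
      rintro (⟨h₁, h₂, -⟩ | ⟨-, h₂, h₃⟩)
      exacts [(h₁.trans h₂).false, (h₂.trans h₃).false]

theorem IsBaxter.revPerm_mul (hB : IsBaxter σ) : IsBaxter (Fin.revPerm * σ) := by
  intro i j k hij hjk H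
  simp only [Equiv.Perm.mul_apply, Fin.revPerm_apply, Fin.rev_lt_rev] at H
  exact hB i j k hij hjk (by tauto)

theorem IsBaxter.mul_revPerm (hB : IsBaxter σ) : IsBaxter (σ * Fin.revPerm) := by
  rw [isBaxter_iff] at hB ⊢
  intro i j j' k hij hj' hj'k
  have := hB (Fin.rev_lt_rev.mpr hj'k) (by simp [Fin.val_rev]; omega) (Fin.rev_lt_rev.mpr hij)
  simp only [Equiv.Perm.mul_apply, Fin.revPerm_apply]
  tauto

theorem IsBaxter.not_3142_of_val_succ (hB : IsBaxter σ) {i p r l : Fin n} (hip : i < p)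
    (hpr : p < r) (hrl : r < l) (hp : σ p < σ l) (hr : σ i < σ r) (hil : (σ i : ℕ) = σ l + 1) :
    False := by
  have hli : σ l < σ i := Fin.lt_def.mpr (by omega)
  obtain ⟨x, y, hpx, hxy, hyr, hx, hy⟩ :=
    Fin.exists_crossing (P := fun x => σ x < σ l) hpr.le hp (hli.trans hr).asymm
  have hyl : σ y ≠ σ l := σ.injective.ne (hyr.trans_lt hrl).ne
  have hyi : σ y ≠ σ i := σ.injective.ne (hip.trans_le (hpx.trans (Fin.le_def.mpr (by omega)))).ne'
  have hiy : σ i < σ y := by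
    simp only [Fin.lt_def, ne_eq, Fin.ext_iff, not_lt] at hy hyl hyi ⊢
    omega
  rw [isBaxter_iff] at hB
  exact (hB (hip.trans_le hpx) hxy (hyr.trans_lt hrl)).2 ⟨hx, hli, hiy⟩

theorem IsBaxter.not_2413_of_val_succ (hB : IsBaxter σ) {i p r l : Fin n} (hip : i < p)
    (hpr : p < r) (hrl : r < l) (hp : σ l < σ p) (hr : σ r < σ i) (hil : (σ l : ℕ) = σ i + 1) :
    False :=
  hB.revPerm_mul.not_3142_of_val_succ hip hpr hrl (Fin.rev_lt_rev.mpr hp) (Fin.rev_lt_rev.mpr hr)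
    (by simp [Fin.val_rev]; omega)

theorem IsBaxter.inv_s11 (hB : IsBaxter σ) : IsBaxter σ⁻¹ := by
  intro a b c hab hbc H
  set b' : Fin n := ⟨b + 1, lt_of_le_of_lt hbc c.isLt⟩
  rcases H with ⟨h₁, h₂, h₃⟩ | ⟨h₁, h₂, h₃⟩
  · have hb'c : b' < c := lt_of_le_of_ne hbc fun h => (h₁.trans h₂).ne (congrArg _ h)
    exact hB.not_3142_of_val_succ h₁ h₂ h₃ (by simpa using hab) (by simpa using hb'c) (by simp [b'])
  · have hb'c : b' < c := lt_of_le_of_ne hbc fun h => (h₂.trans h₃).ne' (congrArg _ h)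
    exact hB.not_2413_of_val_succ h₁ h₂ h₃ (by simpa using hb'c) (by simpa using hab) (by simp [b'])

end Baxter

theorem IsAlternating.conj_revPerm {n : ℕ} {σ : Equiv.Perm (Fin n)} (hn : Even n)
    (hA : IsAlternating σ) : IsAlternating (Fin.revPerm * σ * Fin.revPerm) := by
  intro i hi
  set j : Fin n := ⟨i + 1, hi⟩
  have hj : (Fin.rev j : ℕ) + 1 < n := by simp [j, Fin.val_rev]; omega
  have hsucc : (⟨Fin.rev j + 1, hj⟩ : Fin n) = Fin.rev i :=
    Fin.ext (by simp [j, Fin.val_rev]; omega)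
  have heven : Even (Fin.rev j : ℕ) ↔ Even (i : ℕ) := by
    obtain ⟨k, rfl⟩ := hn
    simp only [j, Fin.val_rev, Nat.even_iff]
    omega
  have key := hA (Fin.rev j) hj
  rw [hsucc, ← Nat.not_even_iff_odd, heven] at key
  simpa only [Equiv.Perm.mul_apply, Fin.revPerm_apply, Fin.rev_lt_rev, ← Nat.not_even_iff_odd]

section AntiTranspose

variable {n : ℕ}

def antiTranspose (σ : Equiv.Perm (Fin n)) : Equiv.Perm (Fin n) :=
  Fin.revPerm * σ⁻¹ * Fin.revPerm

theorem antiTranspose_inv (σ : Equiv.Perm (Fin n)) :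
    (antiTranspose σ)⁻¹ = Fin.revPerm * σ * Fin.revPerm := by
  ext; simp [antiTranspose, Equiv.Perm.inv_def]

theorem antiTranspose_involutive : Function.Involutive (antiTranspose (n := n)) := by
  intro σ; ext; simp [antiTranspose, Equiv.Perm.inv_def]

theorem antiTranspose_apply_rev_eq_rev_iff (σ : Equiv.Perm (Fin n)) (a b : Fin n) :
    antiTranspose σ (Fin.rev b) = Fin.rev a ↔ σ a = b := by
  simp only [antiTranspose, Equiv.Perm.mul_apply, Fin.revPerm_apply, Fin.rev_rev, Fin.rev_inj,
    Equiv.Perm.inv_eq_iff_eq]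
  exact eq_comm

theorem IsDAB.antiTranspose (hn : Even n) {σ : Equiv.Perm (Fin n)} (h : IsDAB σ) :
    IsDAB (antiTranspose σ) := by
  obtain ⟨hB, hA, hA'⟩ := h
  refine ⟨hB.inv_s11.revPerm_mul.mul_revPerm, hA'.conj_revPerm hn, ?_⟩
  rw [antiTranspose_inv]
  exact hA.conj_revPerm hn

theorem isDAB_antiTranspose_iff (hn : Even n) {σ : Equiv.Perm (Fin n)} :
    IsDAB (antiTranspose σ) ↔ IsDAB σ :=
  ⟨fun h => antiTranspose_involutive σ ▸ h.antiTranspose hn, IsDAB.antiTranspose hn⟩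

end AntiTranspose

theorem dabCount_eq_card (m : ℕ) (a b : Fin (2 * m)) :
    dabCount m (a + 1) (b + 1) = Nat.card {σ : Equiv.Perm (Fin (2 * m)) // IsDAB σ ∧ σ a = b} := by
  simp [dabCount, Fin.ext_iff]

theorem dabCount_symm_antidiag_general (m i j : ℕ) (hi1 : 1 ≤ i) (hi2 : i ≤ 2 * m)
    (hj1 : 1 ≤ j) (hj2 : j ≤ 2 * m) :
    dabCount m i j = dabCount m (2 * m + 1 - j) (2 * m + 1 - i) := by
  obtain ⟨a, rfl⟩ : ∃ a : Fin (2 * m), (a : ℕ) + 1 = i := ⟨⟨i - 1, by omega⟩, by simp; omega⟩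
  obtain ⟨b, rfl⟩ : ∃ b : Fin (2 * m), (b : ℕ) + 1 = j := ⟨⟨j - 1, by omega⟩, by simp; omega⟩
  have hrev (c : Fin (2 * m)) : 2 * m + 1 - (c + 1) = (Fin.rev c : ℕ) + 1 := by
    simp [Fin.val_rev]; omega
  rw [hrev, hrev, dabCount_eq_card, dabCount_eq_card]
  exact Nat.card_congr <| (antiTranspose_involutive.toPerm _).subtypeEquiv fun σ =>
    and_congr (isDAB_antiTranspose_iff (even_two_mul m)).symm
      (antiTranspose_apply_rev_eq_rev_iff σ a b).symm

theorem dabCount_symm_antidiag (m i j : ℕ) (hm : 1 ≤ m) (hi1 : 1 ≤ i) (hi2 : i ≤ 2 * m)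
    (hj1 : 1 ≤ j) (hj2 : j ≤ 2 * m) :
    dabCount m i j = dabCount m (2 * m + 1 - j) (2 * m + 1 - i) :=
  dabCount_symm_antidiag_general m i j hi1 hi2 hj1 hj2
end

section
/- If σ is a doubly alternating Baxter permutation of {1,...,2m} (m ≥ 1), then σ(1) is odd. -/
/-!
`σ⁻¹` is alternating, so the smallest value of `σ⁻¹` can only sit at an even (0-indexed)
position `j`: otherwise the ascent at `j - 1` would give `σ⁻¹ (j - 1) < σ⁻¹ j = 0`.
That position is `j = σ 0`.
-/

theorem IsAlternating.even_of_apply_eq_zero {n : ℕ} {τ : Equiv.Perm (Fin n)}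
    (hτ : IsAlternating τ) (j : Fin n) (hj : (τ j : ℕ) = 0) : Even (j : ℕ) := by
  by_contra hodd
  obtain ⟨t, ht⟩ := Nat.not_even_iff_odd.mp hodd
  have hasc := (hτ ⟨2 * t, by omega⟩ (show 2 * t + 1 < n by omega)).1 (even_two_mul t)
  have hnext : (⟨2 * t + 1, by omega⟩ : Fin n) = j := Fin.ext ht.symm
  rw [hnext, Fin.lt_def, hj] at hasc
  exact Nat.not_lt_zero _ hasc

theorem dab_first_value_odd (m : ℕ) (hm : 1 ≤ m) (σ : Equiv.Perm (Fin (2 * m)))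
    (h : IsDAB σ) :
    Odd (((σ ⟨0, by omega⟩ : Fin (2 * m)) : ℕ) + 1) :=
  (h.2.2.even_of_apply_eq_zero _ (by simp)).add_one
end
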